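/- Let X be a complex Banach space, let A : X → X be a bounded linear operator, let q₀ > 0, and assume the spectrum σ(A) is contained in {z ∈ ℂ : Re z > q₀}. Let α ∈ ℝ with 1 < α < 2, let a, b ∈ X, and let ψ be a continuous linear functional on X. Suppose that for every η ∈ ℂ with Re η < 0, (-η)^{1/α} · ψ((A - η·I)^{-1} a) = - ψ((A - η·I)^{-1} b), where (A - η·I)^{-1} exists as a bounded operator since η lies in the resolvent set of A, and w^{1/α} denotes the principal complex power. Then ψ((A - z·I)^{-1} a) = 0 and ψ((A - z·I)^{-1} b) = 0 for every z in the connected component of the resolvent set of A containing the half-plane {z ∈ ℂ : Re z < 0}. -/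

import Mathlib

/-!
Put `c = 1/α`, `F z = ψ((A - z)⁻¹ a)` and `G z = ψ((A - z)⁻¹ b)`; both are holomorphic on
the resolvent set. The region `Ω = {Re z < q₀} ∖ (-∞, 0]` lies in the resolvent set, is
connected, and the principal power `z ^ c` is holomorphic on it. On the upper, resp. lower,
quarter of the left half-plane, `(-z) ^ c = e^{∓iπc} z ^ c`, so the hypothesis continues to the
two identities `e^{∓iπc} z ^ c F z + G z = 0` on all of `Ω`. Subtracting them gives
`2 sin(πc) z ^ c F z = 0`, and `sin(πc) ≠ 0` because `0 < c < 1`. Hence `F = G = 0` on `Ω`,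
and by the identity theorem on the whole component of the resolvent set containing the left
half-plane.
-/

open Complex Set Filter Topology
open scoped Real

namespace Complex

lemma log_neg_of_im_pos {z : ℂ} (hz : 0 < z.im) : log (-z) = log z - π * I := by
  apply Complex.ext
  · simp [log_re]
  · simp [log_im, arg_neg_eq_arg_sub_pi_of_im_pos hz]

lemma log_neg_of_im_neg {z : ℂ} (hz : z.im < 0) : log (-z) = log z + π * I := by
  apply Complex.ext
  · simp [log_re]
  · simp [log_im, arg_neg_eq_arg_add_pi_of_im_neg hz]

lemma neg_cpow_of_im_pos {z : ℂ} (hz : 0 < z.im) (c : ℂ) :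
    (-z) ^ c = z ^ c * exp (-(π * c * I)) := by
  have hz0 : z ≠ 0 := fun h => by simp [h] at hz
  rw [cpow_def_of_ne_zero (neg_ne_zero.2 hz0), cpow_def_of_ne_zero hz0, ← exp_add,
    log_neg_of_im_pos hz]
  ring_nf

lemma neg_cpow_of_im_neg {z : ℂ} (hz : z.im < 0) (c : ℂ) :
    (-z) ^ c = z ^ c * exp (π * c * I) := by
  have hz0 : z ≠ 0 := fun h => by simp [h] at hz
  rw [cpow_def_of_ne_zero (neg_ne_zero.2 hz0), cpow_def_of_ne_zero hz0, ← exp_add,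
    log_neg_of_im_neg hz]
  ring_nf

lemma exp_neg_mul_I_sub_exp_mul_I (x : ℂ) : exp (-(x * I)) - exp (x * I) = -2 * I * sin x := by
  rw [← neg_mul, exp_mul_I, exp_mul_I, cos_neg, sin_neg]
  ring

lemma sin_pi_mul_ofReal_ne_zero {x : ℝ} (h0 : 0 < x) (h1 : x < 1) : sin (π * x) ≠ 0 := by
  rw [← ofReal_mul, ← ofReal_sin, ofReal_ne_zero]
  exact (Real.sin_pos_of_pos_of_lt_pi (by positivity) (by nlinarith [Real.pi_pos])).ne'

lemma isPreconnected_setOf_re_lt_inter_slitPlane {r : ℝ} (hr : 0 < r) :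
    IsPreconnected ({z : ℂ | z.re < r} ∩ slitPlane) := by
  have hmem : ((r / 2 : ℝ) : ℂ) ∈ {z : ℂ | z.re < r} := by simp; linarith
  have hstar := ((convex_halfSpace_re_lt r).starConvex hmem).inter
    (starConvex_ofReal_slitPlane (half_pos hr))
  exact (hstar.isPathConnected
    ⟨hmem, ofReal_mem_slitPlane.2 (half_pos hr)⟩).isConnected.isPreconnected

theorem eqOn_zero_of_neg_cpow_mul_eq_neg {U : Set ℂ} (hUc : IsPreconnected U)
    (hUs : U ⊆ slitPlane) {F G : ℂ → ℂ} (hF : AnalyticOnNhd ℂ F U) (hG : AnalyticOnNhd ℂ G U)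
    {c : ℂ} (hc : sin (π * c) ≠ 0) {p q : ℂ} (hp : p ∈ U) (hp_im : 0 < p.im)
    (hq : q ∈ U) (hq_im : q.im < 0)
    (hFGp : ∀ᶠ z in 𝓝 p, (-z) ^ c * F z = -G z)
    (hFGq : ∀ᶠ z in 𝓝 q, (-z) ^ c * F z = -G z) :
    EqOn F 0 U ∧ EqOn G 0 U := by
  have hH : ∀ w : ℂ, AnalyticOnNhd ℂ (fun z => w * z ^ c * F z + G z) U := fun w z hz =>
    ((analyticAt_const.mul (analyticAt_id.cpow analyticAt_const (hUs hz))).mul (hF z hz)).add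
      (hG z hz)
  have hupper : EqOn (fun z => exp (-(π * c * I)) * z ^ c * F z + G z) 0 U := by
    refine (hH _).eqOn_zero_of_preconnected_of_eventuallyEq_zero hUc hp ?_
    filter_upwards [hFGp, (isOpen_lt continuous_const continuous_im).mem_nhds hp_im]
      with z hz him
    rw [neg_cpow_of_im_pos him] at hz
    simp only [Pi.zero_apply]
    linear_combination hz
  have hlower : EqOn (fun z => exp (π * c * I) * z ^ c * F z + G z) 0 U := by
    refine (hH _).eqOn_zero_of_preconnected_of_eventuallyEq_zero hUc hq ?_
    filter_upwards [hFGq, (isOpen_lt continuous_im continuous_const).mem_nhds hq_im]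
      with z hz him
    rw [neg_cpow_of_im_neg him] at hz
    simp only [Pi.zero_apply]
    linear_combination hz
  have hF0 : EqOn F 0 U := by
    intro z hz
    have hdiff : (-2 * I * sin (π * c)) * z ^ c * F z = 0 := by
      rw [← exp_neg_mul_I_sub_exp_mul_I]
      linear_combination hupper hz - hlower hz
    have hpow : z ^ c ≠ 0 := by simp [cpow_eq_zero_iff, slitPlane_ne_zero (hUs hz)]
    simpa [hc, hpow, I_ne_zero] using hdiff
  refine ⟨hF0, fun z hz => ?_⟩
  simpa [hF0 hz] using hupper hz

end Complex

lemma differentiableOn_inverse_sub_smul_one {B : Type*} [NormedRing B] [NormedAlgebra ℂ B]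
    [CompleteSpace B] (a : B) :
    DifferentiableOn ℂ (fun z : ℂ => Ring.inverse (a - z • 1)) (spectrum ℂ a)ᶜ := by
  intro z hz
  have hunit : IsUnit (a - z • 1) := by
    simpa [Algebra.algebraMap_eq_smul_one] using (spectrum.notMem_iff.mp hz).neg
  exact (((differentiableAt_const a).sub (differentiableAt_id.smul_const 1)).inverse
    hunit).differentiableWithinAt

lemma analyticOnNhd_apply_inverse_sub_smul_one {X : Type*} [NormedAddCommGroup X]
    [NormedSpace ℂ X] [CompleteSpace X] (A : X →L[ℂ] X) (ψ : X →L[ℂ] ℂ) (x : X) :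
    AnalyticOnNhd ℂ (fun z : ℂ => ψ (Ring.inverse (A - z • 1) x)) (spectrum ℂ A)ᶜ :=
  DifferentiableOn.analyticOnNhd
    (fun z hz => (ψ.differentiableAt.comp z
      (((differentiableOn_inverse_sub_smul_one A).differentiableAt
        ((spectrum.isClosed A).isOpen_compl.mem_nhds hz)).clm_apply
          (differentiableAt_const x))).differentiableWithinAt)
    (spectrum.isClosed A).isOpen_compl

theorem stmt_8_general {X : Type*} [NormedAddCommGroup X] [NormedSpace ℂ X] [CompleteSpace X]
    (A : X →L[ℂ] X) (q₀ : ℝ) (hq₀ : 0 < q₀)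
    (hspec : spectrum ℂ A ⊆ {z : ℂ | q₀ < z.re})
    (α : ℝ) (hα1 : 1 < α)
    (a b : X) (ψ : X →L[ℂ] ℂ)
    (heq : ∀ η : ℂ, η.re < 0 →
      (-η) ^ ((1 / α : ℝ) : ℂ) * ψ ((Ring.inverse (A - η • (1 : X →L[ℂ] X))) a) =
        - ψ ((Ring.inverse (A - η • (1 : X →L[ℂ] X))) b)) :
    ∀ z ∈ connectedComponentIn ((spectrum ℂ A)ᶜ) (-1 : ℂ),
      ψ ((Ring.inverse (A - z • (1 : X →L[ℂ] X))) a) = 0 ∧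
      ψ ((Ring.inverse (A - z • (1 : X →L[ℂ] X))) b) = 0 := by
  set F : X → ℂ → ℂ := fun x z => ψ (Ring.inverse (A - z • (1 : X →L[ℂ] X)) x)
  have hF := analyticOnNhd_apply_inverse_sub_smul_one A ψ
  have hre : {z : ℂ | z.re < q₀} ⊆ (spectrum ℂ A)ᶜ := fun z hz hA =>
    lt_asymm (show z.re < q₀ from hz) (show q₀ < z.re from hspec hA)
  have hleft : {z : ℂ | z.re < 0} ⊆ connectedComponentIn (spectrum ℂ A)ᶜ (-1) :=
    (convex_halfSpace_re_lt 0).isPreconnected.subset_connectedComponentIn (by simp)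
      fun z hz => hre (lt_trans hz hq₀)
  have hFG : ∀ p : ℂ, p.re < 0 → ∀ᶠ z in 𝓝 p, (-z) ^ ((1 / α : ℝ) : ℂ) * F a z = -F b z :=
    fun p hp => eventually_of_mem ((isOpen_lt continuous_re continuous_const).mem_nhds hp) heq
  set Ω : Set ℂ := {z : ℂ | z.re < q₀} ∩ slitPlane
  have hΩS : Ω ⊆ (spectrum ℂ A)ᶜ := inter_subset_left.trans hre
  have hp : -1 + I ∈ Ω := ⟨by simp; linarith, by simp [mem_slitPlane_iff]⟩
  have hq : -1 - I ∈ Ω := ⟨by simp; linarith, by simp [mem_slitPlane_iff]⟩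
  have hc : sin (π * ((1 / α : ℝ) : ℂ)) ≠ 0 :=
    sin_pi_mul_ofReal_ne_zero (by positivity) (by rw [div_lt_one] <;> linarith)
  obtain ⟨hFΩ, hGΩ⟩ := eqOn_zero_of_neg_cpow_mul_eq_neg
    (isPreconnected_setOf_re_lt_inter_slitPlane hq₀) inter_subset_right ((hF a).mono hΩS)
    ((hF b).mono hΩS) hc hp (by simp) hq (by simp) (hFG _ (by simp)) (hFG _ (by simp))
  have hΩ_nhds : Ω ∈ 𝓝 (-1 + I) :=
    ((isOpen_lt continuous_re continuous_const).inter isOpen_slitPlane).mem_nhds hp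
  have hextend : ∀ x : X, EqOn (F x) 0 Ω →
      EqOn (F x) 0 (connectedComponentIn (spectrum ℂ A)ᶜ (-1)) := fun x hx =>
    ((hF x).mono (connectedComponentIn_subset _ _)).eqOn_zero_of_preconnected_of_eventuallyEq_zero
      isPreconnected_connectedComponentIn (hleft (by simp)) (eventuallyEq_of_mem hΩ_nhds hx)
  exact fun z hz => ⟨hextend a hFΩ hz, hextend b hGΩ hz⟩

/-- Resolvent formulation of the First Step of the proof of Theorem 1: if the spectrum of
a bounded operator `A` lies in `{Re z > q₀}` with `q₀ > 0`, and
`(-η)^{1/α} ψ((A - η)⁻¹ a) = -ψ((A - η)⁻¹ b)` for every `η` with `Re η < 0`, then both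
pairings vanish on the connected component of the resolvent set containing the
half-plane `{Re z < 0}` (the component of `-1`). -/
theorem stmt_8 {X : Type*} [NormedAddCommGroup X] [NormedSpace ℂ X] [CompleteSpace X]
    (A : X →L[ℂ] X) (q₀ : ℝ) (hq₀ : 0 < q₀)
    (hspec : spectrum ℂ A ⊆ {z : ℂ | q₀ < z.re})
    (α : ℝ) (hα1 : 1 < α) (hα2 : α < 2)
    (a b : X) (ψ : X →L[ℂ] ℂ)
    (heq : ∀ η : ℂ, η.re < 0 →
      (-η) ^ ((1 / α : ℝ) : ℂ) * ψ ((Ring.inverse (A - η • (1 : X →L[ℂ] X))) a) =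
        - ψ ((Ring.inverse (A - η • (1 : X →L[ℂ] X))) b)) :
    ∀ z ∈ connectedComponentIn ((spectrum ℂ A)ᶜ) (-1 : ℂ),
      ψ ((Ring.inverse (A - z • (1 : X →L[ℂ] X))) a) = 0 ∧
      ψ ((Ring.inverse (A - z • (1 : X →L[ℂ] X))) b) = 0 :=
  stmt_8_general A q₀ hq₀ hspec α hα1 a b ψ heq
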